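/- Let (X,d) be a metric space. The following are equivalent: (a) (X,d) is complete; (b) for every metric space (Y,ρ), every continuous function f : (X,d) → (Y,ρ) is strongly uniformly continuous on every totally bounded subset of X; (c) for every metric space (Y,ρ), every continuous function f : (X,d) → (Y,ρ) is strongly uniformly continuous on the range of each Cauchy sequence in X; (d) every continuous function f : (X,d) → ℝ is strongly uniformly continuous on the range of each Cauchy sequence in X. -/

import Mathlib

/-!
Completeness gives (b): the closure of a totally bounded set is compact, and a function continuous
at the points of a compact set `K` is strongly uniformly continuous on `K` (Heine–Cantor). Since
the range of a Cauchy sequence is totally bounded, (b) gives (c), and (d) is the special case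
`Y = ℝ`. For (d) ⇒ (a), strong uniform continuity on the range of a Cauchy sequence `u` forces
`f ∘ u` to be Cauchy. If `u` had no limit in `X`, it would converge to a point `p` of the
completion outside `X`, and `x ↦ 1 / dist x p` would be continuous on `X` while tending to
infinity along `u`.
-/

universe u v

/-- `f` is strongly uniformly continuous on `B` if for every `ε > 0` there is a `δ > 0` such
that whenever `dist x y < δ` and `{x, y} ∩ B ≠ ∅`, we have `dist (f x) (f y) < ε`. -/
def StrongUnifContOn {X : Type u} {Y : Type v} [MetricSpace X] [MetricSpace Y]
    (f : X → Y) (B : Set X) : Prop :=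
  ∀ ε > (0 : ℝ), ∃ δ > (0 : ℝ), ∀ x y : X,
    dist x y < δ → (x ∈ B ∨ y ∈ B) → dist (f x) (f y) < ε

open Filter Topology Set

section StrongUnifContOn

variable {X : Type*} {Y : Type*} [MetricSpace X] [MetricSpace Y] {f : X → Y}

theorem StrongUnifContOn.mono {A B : Set X} (h : StrongUnifContOn f B) (hAB : A ⊆ B) :
    StrongUnifContOn f A := by
  intro ε hε
  obtain ⟨δ, hδ, hfδ⟩ := h ε hε
  exact ⟨δ, hδ, fun x y hxy hmem => hfδ x y hxy (hmem.imp (@hAB x) (@hAB y))⟩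

theorem IsCompact.strongUnifContOn {K : Set X} (hK : IsCompact K)
    (hf : ∀ x ∈ K, ContinuousAt f x) : StrongUnifContOn f K := by
  intro ε hε
  obtain ⟨δ, hδ, hfδ⟩ := Metric.mem_uniformity_dist.mp
    (hK.uniformContinuousAt_of_continuousAt f hf (Metric.dist_mem_uniformity hε))
  refine ⟨δ, hδ, fun x y hxy hmem => ?_⟩
  rcases hmem with hx | hy
  · exact hfδ hxy hx
  · rw [dist_comm]
    exact hfδ (by rwa [dist_comm]) hy

theorem TotallyBounded.strongUnifContOn [CompleteSpace X] {B : Set X} (hB : TotallyBounded B)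
    (hf : Continuous f) : StrongUnifContOn f B :=
  ((hB.closure.isCompact_of_isClosed isClosed_closure).strongUnifContOn
    fun _ _ => hf.continuousAt).mono subset_closure

theorem StrongUnifContOn.cauchySeq_comp {u : ℕ → X} (h : StrongUnifContOn f (range u))
    (hu : CauchySeq u) : CauchySeq (f ∘ u) := by
  refine Metric.cauchySeq_iff'.mpr fun ε hε => ?_
  obtain ⟨δ, hδ, hfδ⟩ := h ε hε
  obtain ⟨N, hN⟩ := Metric.cauchySeq_iff'.mp hu δ hδ
  exact ⟨N, fun n hn => hfδ _ _ (hN n hn) (Or.inl (mem_range_self n))⟩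

end StrongUnifContOn

open UniformSpace in
theorem CauchySeq.exists_continuous_tendsto_atTop {X : Type*} [MetricSpace X] {u : ℕ → X}
    (hu : CauchySeq u) (hlim : ∀ x, ¬Tendsto u atTop (𝓝 x)) :
    ∃ f : X → ℝ, Continuous f ∧ Tendsto (f ∘ u) atTop atTop := by
  obtain ⟨p, hp⟩ := cauchySeq_tendsto_of_complete
    ((Completion.uniformContinuous_coe X).comp_cauchySeq hu)
  have hpos : ∀ x : X, 0 < dist (x : Completion X) p := by
    refine fun x => dist_pos.mpr fun hxp => hlim x ?_
    rw [tendsto_iff_dist_tendsto_zero]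
    simpa only [← hxp, Function.comp_def, Completion.dist_eq] using
      tendsto_iff_dist_tendsto_zero.mp hp
  refine ⟨fun x => (dist (x : Completion X) p)⁻¹,
    ((Completion.continuous_coe X).dist continuous_const).inv₀ fun x => (hpos x).ne', ?_⟩
  have hdist : Tendsto (fun n => dist (u n : Completion X) p) atTop (𝓝[>] 0) :=
    tendsto_nhdsWithin_iff.mpr
      ⟨tendsto_iff_dist_tendsto_zero.mp hp, Eventually.of_forall fun n => hpos (u n)⟩
  exact tendsto_inv_nhdsGT_zero.comp hdist

theorem complete_iff_strongUnifCont_on_totallyBounded {X : Type u} [MetricSpace X] :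
    List.TFAE
      [CompleteSpace X,
       ∀ (Y : Type v) [MetricSpace Y] (f : X → Y), Continuous f →
         ∀ B : Set X, TotallyBounded B → StrongUnifContOn f B,
       ∀ (Y : Type v) [MetricSpace Y] (f : X → Y), Continuous f →
         ∀ u : ℕ → X, CauchySeq u → StrongUnifContOn f (Set.range u),
       ∀ f : X → ℝ, Continuous f →
         ∀ u : ℕ → X, CauchySeq u → StrongUnifContOn f (Set.range u)] := by
  tfae_have 1 → 2 := fun _ _ _ _ hf _ hB => hB.strongUnifContOn hf
  tfae_have 2 → 3 := fun h2 Y _ f hf _ hu => h2 Y f hf _ hu.totallyBounded_range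
  tfae_have 3 → 4 := by
    intro h3 f hf u hu ε hε
    exact h3 (ULift.{v} ℝ) (ULift.up ∘ f) (continuous_uliftUp.comp hf) u hu ε hε
  tfae_have 4 → 1 := by
    intro h4
    refine Metric.complete_of_cauchySeq_tendsto fun u hu => ?_
    by_contra! hlim
    obtain ⟨f, hf, hfu⟩ := hu.exists_continuous_tendsto_atTop hlim
    obtain ⟨L, hL⟩ := cauchySeq_tendsto_of_complete ((h4 f hf u hu).cauchySeq_comp hu)
    exact not_tendsto_nhds_of_tendsto_atTop hfu L hL
  tfae_finish
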